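/- arXiv:0910.3872 — 4 statements merged into one kernel-verified Lean document; each statement's English description precedes it below -/
import Mathlib

section
/- Let n ≥ 1, let R : ℝ → Matrix (Fin n) (Fin n) ℝ be continuous with R(t) symmetric for every t, let I ⊆ ℝ be an open interval, and let Y be a Lagrangian Jacobi solution along R such that Y(t) is invertible for every t ∈ I. Then for every t₀ ∈ I and every Jacobi solution Z along R there exist constant matrices C₁, C₂ ∈ Matrix (Fin n) (Fin n) ℝ such that Z(t) = Y(t) * ((∫_{t₀}^{t} (Y(s)ᵀ * Y(s))⁻¹ ds) * C₁ + C₂) for all t ∈ I. -/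
/-!
The Wronskian `W = Yᵀ Z' - Y'ᵀ Z` of two Jacobi solutions is constant, since its derivative is
`Yᵀ Z'' - Y''ᵀ Z = -Yᵀ R Z + Yᵀ Rᵀ Z = 0` for symmetric `R`. Where `Y` is invertible, the
Lagrangian condition `Y'ᵀ Y = Yᵀ Y'` turns the quotient rule into `(Y⁻¹ Z)' = (Yᵀ Y)⁻¹ W`, so on
the interval `I` the maps `Y⁻¹ Z` and `(∫_{t₀}^t (Yᵀ Y)⁻¹) W(t₀) + Y(t₀)⁻¹ Z(t₀)` have the same
derivative and agree at `t₀`, hence coincide.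
-/

open Matrix MeasureTheory

attribute [local instance] Matrix.normedAddCommGroup Matrix.normedSpace

def IsJacobi {n : ℕ} (R Y : ℝ → Matrix (Fin n) (Fin n) ℝ) : Prop :=
  ContDiff ℝ 2 Y ∧ ∀ t : ℝ, deriv (deriv Y) t + R t * Y t = 0

/-- A Lagrangian (self-conjugate) solution: the Wronskian `W(Y,Y)` vanishes. -/
def IsLagrangian {n : ℕ} (Y : ℝ → Matrix (Fin n) (Fin n) ℝ) : Prop :=
  ∀ t : ℝ, (deriv Y t)ᵀ * Y t = (Y t)ᵀ * deriv Y t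

theorem intervalIntegral.hasDerivAt_integral_of_continuousOn {E : Type*} [NormedAddCommGroup E]
    [NormedSpace ℝ E] [CompleteSpace E] {f : ℝ → E} {I : Set ℝ} (hIopen : IsOpen I)
    (hI : I.OrdConnected) (hf : ContinuousOn f I) {a b : ℝ} (ha : a ∈ I) (hb : b ∈ I) :
    HasDerivAt (fun u => ∫ x in a..u, f x) (f b) b :=
  integral_hasDerivAt_right (hf.mono (hI.uIcc_subset ha hb)).intervalIntegrable
    (hf.stronglyMeasurableAtFilter hIopen b hb) (hf.continuousAt (hIopen.mem_nhds hb))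

theorem IsUnit.transpose_mul_self {m α : Type*} [Fintype m] [DecidableEq m] [CommRing α]
    {A : Matrix m m α} (hA : IsUnit A) : IsUnit (Aᵀ * A) :=
  (A.isUnit_transpose.2 hA).mul hA

section MatrixCalculus

variable {𝕜 m k : Type*} [NontriviallyNormedField 𝕜] [Fintype m] [Fintype k] {t : 𝕜}

theorem HasDerivAt.matrix_transpose {f : 𝕜 → Matrix m k 𝕜} {f' : Matrix m k 𝕜}
    (hf : HasDerivAt f f' t) : HasDerivAt (fun s => (f s)ᵀ) f'ᵀ t :=
  (⟨(transposeLinearEquiv m k 𝕜 𝕜).toLinearMap, continuous_id.matrix_transpose⟩ :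
    Matrix m k 𝕜 →L[𝕜] Matrix k m 𝕜).hasFDerivAt.comp_hasDerivAt t hf

variable [DecidableEq m] {f g : 𝕜 → Matrix m m 𝕜} {f' g' : Matrix m m 𝕜}

/- `HasDerivAt` only sees the topology, so in the proofs below the operator norm, which makes
square matrices a normed algebra, may stand in for the entrywise norm. -/

theorem HasDerivAt.matrix_mul (hf : HasDerivAt f f' t) (hg : HasDerivAt g g' t) :
    HasDerivAt (fun s => f s * g s) (f' * g t + f t * g') t :=
  let _ := Matrix.linftyOpNormedRing (n := m) (α := 𝕜)
  let _ := Matrix.linftyOpNormedAlgebra (n := m) (R := 𝕜) (α := 𝕜)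
  hf.mul hg

theorem HasDerivAt.matrix_inv [CompleteSpace 𝕜] (hf : HasDerivAt f f' t) (hft : IsUnit (f t)) :
    HasDerivAt (fun s => (f s)⁻¹) (-((f t)⁻¹ * f' * (f t)⁻¹)) t := by
  let _ := Matrix.linftyOpNormedRing (n := m) (α := 𝕜)
  let _ := Matrix.linftyOpNormedAlgebra (n := m) (R := 𝕜) (α := 𝕜)
  -- the uniformity is given explicitly: instance search would pick the entrywise one
  have _ : @CompleteSpace (Matrix m m 𝕜) Matrix.linftyOpNormedRing.toUniformSpace :=
    FiniteDimensional.complete 𝕜 _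
  obtain ⟨u, hu⟩ := hft
  have hinv := hasFDerivAt_ringInverse (𝕜 := 𝕜) u
  have hu' : (↑u⁻¹ : Matrix m m 𝕜) = (f t)⁻¹ := by
    rw [nonsing_inv_eq_ringInverse, ← hu, Ring.inverse_unit]
  rw [hu, hu'] at hinv
  rw [show (fun s => (f s)⁻¹) = Ring.inverse ∘ f from funext fun s => nonsing_inv_eq_ringInverse _]
  exact (hinv.comp_hasDerivAt t hf).congr_deriv (by simp)

theorem HasDerivAt.matrix_inv_mul_of_transpose_mul_comm [CompleteSpace 𝕜]
    (hf : HasDerivAt f f' t) (hg : HasDerivAt g g' t) (hft : IsUnit (f t))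
    (hcomm : f'ᵀ * f t = (f t)ᵀ * f') :
    HasDerivAt (fun s => (f s)⁻¹ * g s) (((f t)ᵀ * f t)⁻¹ * ((f t)ᵀ * g' - f'ᵀ * g t)) t := by
  refine ((hf.matrix_inv hft).matrix_mul hg).congr_deriv ?_
  have hdet := (isUnit_iff_isUnit_det _).mp hft
  have hGram := (isUnit_iff_isUnit_det _).mp hft.transpose_mul_self
  refine (nonsing_inv_mul_cancel_left _ _ hGram).symm.trans (congrArg _ ?_)
  simp only [mul_add, mul_neg, neg_mul, mul_assoc, mul_nonsing_inv_cancel_left _ _ hdet]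
  rw [← mul_assoc, ← hcomm, mul_assoc, mul_nonsing_inv_cancel_left _ _ hdet]
  abel

end MatrixCalculus

noncomputable def wronskian {m : Type*} [Fintype m] (Y Z : ℝ → Matrix m m ℝ) (t : ℝ) :
    Matrix m m ℝ :=
  (Y t)ᵀ * deriv Z t - (deriv Y t)ᵀ * Z t

variable {n : ℕ} {R Y Z : ℝ → Matrix (Fin n) (Fin n) ℝ}

namespace IsJacobi

theorem hasDerivAt (hY : IsJacobi R Y) (t : ℝ) : HasDerivAt Y (deriv Y t) t :=
  (hY.1.differentiable (by norm_num) t).hasDerivAt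

theorem hasDerivAt_deriv (hY : IsJacobi R Y) (t : ℝ) :
    HasDerivAt (deriv Y) (-(R t * Y t)) t := by
  have hY' : ContDiff ℝ 1 (deriv Y) := (contDiff_succ_iff_deriv (n := 1).mp hY.1).2.2
  rw [← eq_neg_of_add_eq_zero_left (hY.2 t)]
  exact (hY'.differentiable one_ne_zero t).hasDerivAt

theorem wronskian_eq (hR : ∀ t, (R t)ᵀ = R t) (hY : IsJacobi R Y) (hZ : IsJacobi R Z)
    (s t : ℝ) : wronskian Y Z s = wronskian Y Z t := by
  have hW : ∀ t, HasDerivAt (wronskian Y Z) 0 t := by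
    intro t
    have h := ((hY.hasDerivAt t).matrix_transpose.matrix_mul (hZ.hasDerivAt_deriv t)).sub
      ((hY.hasDerivAt_deriv t).matrix_transpose.matrix_mul (hZ.hasDerivAt t))
    refine h.congr_deriv ?_
    rw [transpose_neg, transpose_mul, hR]
    simp only [Matrix.mul_neg, Matrix.neg_mul, Matrix.mul_assoc]
    abel
  exact is_const_of_deriv_eq_zero (fun t => (hW t).differentiableAt) (fun t => (hW t).deriv) s t

end IsJacobi

theorem jacobi_representation_general {n : ℕ}
    (R : ℝ → Matrix (Fin n) (Fin n) ℝ)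
    (hRsym : ∀ t : ℝ, (R t)ᵀ = R t)
    (I : Set ℝ) (hIopen : IsOpen I) (hIconv : Convex ℝ I)
    (Y : ℝ → Matrix (Fin n) (Fin n) ℝ)
    (hY : IsJacobi R Y) (hYL : IsLagrangian Y)
    (hYinv : ∀ t ∈ I, IsUnit (Y t)) :
    ∀ t₀ ∈ I, ∀ Z : ℝ → Matrix (Fin n) (Fin n) ℝ, IsJacobi R Z →
      ∃ C₁ C₂ : Matrix (Fin n) (Fin n) ℝ, ∀ t ∈ I,
        Z t = Y t * ((∫ s in t₀..t, ((Y s)ᵀ * Y s)⁻¹) * C₁ + C₂) := by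
  intro t₀ ht₀ Z hZ
  set C₁ := wronskian Y Z t₀
  set C₂ := (Y t₀)⁻¹ * Z t₀
  have hquot : ∀ t ∈ I, HasDerivAt (fun s => (Y s)⁻¹ * Z s) (((Y t)ᵀ * Y t)⁻¹ * C₁) t :=
    fun t ht => by
      rw [show C₁ = wronskian Y Z t from hY.wronskian_eq hRsym hZ t₀ t]
      exact (hY.hasDerivAt t).matrix_inv_mul_of_transpose_mul_comm (hZ.hasDerivAt t) (hYinv t ht)
        (hYL t)
  have hGramInv : ContinuousOn (fun s => ((Y s)ᵀ * Y s)⁻¹) I := fun t ht =>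
    (((hY.hasDerivAt t).matrix_transpose.matrix_mul (hY.hasDerivAt t)).matrix_inv
      (hYinv t ht).transpose_mul_self).continuousAt.continuousWithinAt
  have hint : ∀ t ∈ I, HasDerivAt (fun u => (∫ s in t₀..u, ((Y s)ᵀ * Y s)⁻¹) * C₁ + C₂)
      (((Y t)ᵀ * Y t)⁻¹ * C₁) t := fun t ht =>
    (((intervalIntegral.hasDerivAt_integral_of_continuousOn hIopen hIconv.ordConnected hGramInv
      ht₀ ht).matrix_mul (hasDerivAt_const t C₁)).add_const C₂).congr_deriv (by simp)
  have hagree : I.EqOn (fun s => (Y s)⁻¹ * Z s)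
      (fun u => (∫ s in t₀..u, ((Y s)ᵀ * Y s)⁻¹) * C₁ + C₂) :=
    hIopen.eqOn_of_deriv_eq hIconv.isPreconnected
      (fun t ht => (hquot t ht).differentiableAt.differentiableWithinAt)
      (fun t ht => (hint t ht).differentiableAt.differentiableWithinAt)
      (fun t ht => (hquot t ht).deriv.trans (hint t ht).deriv.symm) ht₀ (by simp [C₂])
  refine ⟨C₁, C₂, fun t ht => ?_⟩
  calc Z t = Y t * ((Y t)⁻¹ * Z t) :=
        (mul_nonsing_inv_cancel_left _ _ ((isUnit_iff_isUnit_det _).mp (hYinv t ht))).symm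
    _ = _ := congrArg _ (hagree ht)

/-- Any Jacobi solution `Z` can be expressed via a nonsingular Lagrangian Jacobi
solution `Y` as `Z(t) = Y(t) ((∫_{t₀}^t (YᵀY)⁻¹) C₁ + C₂)` on an open interval. -/
theorem jacobi_representation {n : ℕ} (hn : 1 ≤ n)
    (R : ℝ → Matrix (Fin n) (Fin n) ℝ) (hRc : Continuous R)
    (hRsym : ∀ t : ℝ, (R t)ᵀ = R t)
    (I : Set ℝ) (hIopen : IsOpen I) (hIconv : Convex ℝ I)
    (Y : ℝ → Matrix (Fin n) (Fin n) ℝ)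
    (hY : IsJacobi R Y) (hYL : IsLagrangian Y)
    (hYinv : ∀ t ∈ I, IsUnit (Y t)) :
    ∀ t₀ ∈ I, ∀ Z : ℝ → Matrix (Fin n) (Fin n) ℝ, IsJacobi R Z →
      ∃ C₁ C₂ : Matrix (Fin n) (Fin n) ℝ, ∀ t ∈ I,
        Z t = Y t * ((∫ s in t₀..t, ((Y s)ᵀ * Y s)⁻¹) * C₁ + C₂) :=
  jacobi_representation_general R hRsym I hIopen hIconv Y hY hYL hYinv
end

section
/- Let n ≥ 1 and let B : ℝ → Matrix (Fin n) (Fin n) ℝ be continuous such that B(u) is symmetric positive definite for every u ≥ 0. Then the function s ↦ det (∫₀^{s} B(u) du) is strictly monotonically increasing on (0, ∞). -/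
open Matrix MeasureTheory

attribute [local instance] Matrix.normedAddCommGroup Matrix.normedSpace

/-!
For `0 < a < b` we have `∫₀ᵇ B = A + C` with `A = ∫₀ᵃ B` and `C = ∫ₐᵇ B`, both positive definite.
Writing `A = S * S` with `S = √A` gives `det (A + C) = det A * det (1 + S⁻¹ C S⁻¹)`, and the last
factor is `∏ (1 + λᵢ) > 1`, where the `λᵢ > 0` are the eigenvalues of the positive definite
matrix `S⁻¹ C S⁻¹`.
-/

namespace Matrix

variable {ι : Type*} [Fintype ι]

theorem posDef_intervalIntegral {B : ℝ → Matrix ι ι ℝ} {a b : ℝ} (hab : a < b)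
    (hB : ContinuousOn B (Set.Icc a b)) (hpos : ∀ u ∈ Set.Icc a b, (B u).PosDef) :
    (∫ u in a..b, B u).PosDef := by
  have hint := hB.intervalIntegrable_of_Icc (μ := volume) hab.le
  refine .of_dotProduct_mulVec_pos ?_ fun x hx => ?_
  · have h : ∫ u in a..b, (B u)ᵀ = (∫ u in a..b, B u)ᵀ :=
      (transposeLinearEquiv ι ι ℝ ℝ).toLinearMap.toContinuousLinearMap.intervalIntegral_comp_comm
        hint
    rw [IsHermitian, conjTranspose_eq_transpose_of_trivial, ← h]
    refine intervalIntegral.integral_congr fun u hu => ?_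
    rw [Set.uIcc_of_le hab.le] at hu
    simpa [conjTranspose_eq_transpose_of_trivial] using (hpos u hu).isHermitian.eq
  · let Q : Matrix ι ι ℝ →ₗ[ℝ] ℝ := (dotProductBilin ℝ ℝ x).comp ((mulVecBilin ℝ ℝ).flip x)
    have h : ∫ u in a..b, x ⬝ᵥ B u *ᵥ x = x ⬝ᵥ (∫ u in a..b, B u) *ᵥ x :=
      Q.toContinuousLinearMap.intervalIntegral_comp_comm hint
    rw [star_trivial, ← h]
    refine intervalIntegral.intervalIntegral_pos_of_pos_on
      ((Q.toContinuousLinearMap.continuous.comp_continuousOn hB).intervalIntegrable_of_Icc hab.le)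
      (fun u hu => ?_) hab
    simpa using (hpos u (Set.Ioo_subset_Icc_self hu)).dotProduct_mulVec_pos hx

variable [DecidableEq ι] [Nonempty ι]

theorem PosDef.one_lt_det_one_add {D : Matrix ι ι ℝ} (hD : D.PosDef) : 1 < (1 + D).det := by
  have hH := hD.isHermitian
  have hdet : (1 + D).det = ∏ i, (1 + hH.eigenvalues i) := by
    conv_lhs => rw [hH.spectral_theorem]
    rw [← map_one (Unitary.conjStarAlgAut ℝ _ hH.eigenvectorUnitary), ← map_add,
      Unitary.conjStarAlgAut_apply, det_mul_comm, ← mul_assoc, Unitary.coe_star_mul_self,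
      one_mul, ← diagonal_one, diagonal_add, det_diagonal]
    simp
  rw [hdet]
  simpa using Finset.prod_lt_prod_of_nonempty (f := fun _ => 1) (fun _ _ => one_pos)
    (fun i _ => lt_add_of_pos_right 1 (hD.eigenvalues_pos i)) Finset.univ_nonempty

open scoped MatrixOrder in
theorem PosDef.det_lt_det_add {A C : Matrix ι ι ℝ} (hA : A.PosDef) (hC : C.PosDef) :
    A.det < (A + C).det := by
  set S := CFC.sqrt A
  have hS : S.PosDef := hA.isStrictlyPositive.sqrt.posDef
  have hSS : S * S = A := CFC.sqrt_mul_sqrt_self A hA.posSemidef.nonneg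
  have hSdet : IsUnit S.det := (isUnit_iff_isUnit_det S).mp hS.isUnit
  have hD : (S⁻¹ * C * S⁻¹).PosDef := by
    have := hS.inv.isUnit.posDef_star_left_conjugate_iff.mpr hC
    rwa [star_eq_conjTranspose, hS.isHermitian.inv.eq] at this
  have hAC : A + C = S * (1 + S⁻¹ * C * S⁻¹) * S := by
    rw [mul_add, add_mul, mul_one, hSS, ← mul_assoc, ← mul_assoc, mul_nonsing_inv S hSdet,
      one_mul, mul_assoc, nonsing_inv_mul S hSdet, mul_one]
  calc A.det = A.det * 1 := (mul_one _).symm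
    _ < A.det * (1 + S⁻¹ * C * S⁻¹).det :=
      mul_lt_mul_of_pos_left hD.one_lt_det_one_add hA.det_pos
    _ = (A + C).det := by rw [hAC, det_mul, det_mul, ← hSS, det_mul]; ring

end Matrix

/-- If `B(u)` is symmetric positive definite for all `u ≥ 0`, then
`s ↦ det ∫₀ˢ B(u) du` is strictly monotonically increasing on `(0, ∞)`. -/
theorem det_integral_strictMonoOn {n : ℕ} (hn : 1 ≤ n)
    (B : ℝ → Matrix (Fin n) (Fin n) ℝ) (hBc : Continuous B)
    (hBsym : ∀ u : ℝ, 0 ≤ u → (B u)ᵀ = B u)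
    (hBpos : ∀ u : ℝ, 0 ≤ u → ∀ x : Fin n → ℝ, x ≠ 0 → 0 < (B u *ᵥ x) ⬝ᵥ x) :
    StrictMonoOn (fun s : ℝ => (∫ u in (0 : ℝ)..s, B u).det) (Set.Ioi (0 : ℝ)) := by
  have : Nonempty (Fin n) := ⟨⟨0, hn⟩⟩
  have hBpd (u : ℝ) (hu : 0 ≤ u) : (B u).PosDef := by
    refine .of_dotProduct_mulVec_pos ?_ fun x hx => ?_
    · rw [IsHermitian, conjTranspose_eq_transpose_of_trivial, hBsym u hu]
    · rw [star_trivial, dotProduct_comm]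
      exact hBpos u hu x hx
  have hintegral {a b : ℝ} (ha : 0 ≤ a) (hab : a < b) : (∫ u in a..b, B u).PosDef :=
    posDef_intervalIntegral hab hBc.continuousOn fun u hu => hBpd u (ha.trans hu.1)
  intro a ha b _ hab
  dsimp only
  rw [← intervalIntegral.integral_add_adjacent_intervals (hBc.intervalIntegrable 0 a)
    (hBc.intervalIntegrable a b)]
  exact (hintegral le_rfl ha).det_lt_det_add (hintegral (le_of_lt ha) hab)
end

section
/- Let n ≥ 1 and t₀ < t₁, and let B : ℝ → Matrix (Fin n) (Fin n) ℝ be continuous such that B(s) is symmetric positive definite for every s ∈ [t₀, t₁]. Then the matrix ∫_{t₀}^{t₁} B(s) ds is symmetric positive definite, and its inverse satisfies ‖(∫_{t₀}^{t₁} B(s) ds)⁻¹‖ ≤ (∫_{t₀}^{t₁} ‖B(s)⁻¹‖⁻¹ ds)⁻¹, where ‖·‖ denotes the operator norm on matrices acting on Euclidean ℝⁿ. -/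
/-!
For a symmetric positive definite `M`, Cauchy–Schwarz for the form `(u, v) ↦ u ⬝ᵥ M *ᵥ v`,
applied to `x` and `M⁻¹ x`, gives `(x ⬝ᵥ x)² ≤ (M x ⬝ᵥ x) (x ⬝ᵥ M⁻¹ x) ≤ (M x ⬝ᵥ x) ‖M⁻¹‖ (x ⬝ᵥ x)`,
i.e. the quadratic form of `M` is bounded below by `‖M⁻¹‖⁻¹ ‖x‖²`. Such lower bounds add up under
the integral, so the quadratic form of `∫ B` is bounded below by `c ‖x‖²` with
`c = ∫ ‖B(s)⁻¹‖⁻¹ ds > 0`. This makes `∫ B` positive definite, and for `u = (∫ B)⁻¹ x` it gives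
`c ‖u‖² ≤ x ⬝ᵥ u ≤ ‖x‖ ‖u‖`, i.e. `‖(∫ B)⁻¹‖ ≤ c⁻¹`.
-/

open Matrix MeasureTheory

attribute [local instance] Matrix.normedAddCommGroup Matrix.normedSpace

/-- The operator norm of a matrix acting on Euclidean `ℝⁿ`. -/
noncomputable def matrixOpNorm {n : ℕ} (M : Matrix (Fin n) (Fin n) ℝ) : ℝ :=
  ‖Matrix.toEuclideanCLM (𝕜 := ℝ) M‖

section QuadraticForm

variable {ι : Type*} [Fintype ι]

lemma posDef_of_transpose_eq_of_dotProduct_pos {M : Matrix ι ι ℝ} (hsym : Mᵀ = M)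
    (hpos : ∀ x : ι → ℝ, x ≠ 0 → 0 < (M *ᵥ x) ⬝ᵥ x) : M.PosDef := by
  refine posDef_iff_dotProduct_mulVec.2 ⟨hsym, fun x hx => ?_⟩
  simpa [dotProduct_comm] using hpos x hx

lemma dotProduct_self_eq_norm_sq (x : ι → ℝ) : x ⬝ᵥ x = ‖WithLp.toLp 2 x‖ ^ 2 := by
  rw [← real_inner_self_eq_norm_sq, EuclideanSpace.inner_toLp_toLp, star_trivial]

lemma transpose_intervalIntegral {f : ℝ → Matrix ι ι ℝ} (hf : Continuous f) (a b : ℝ) :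
    (∫ s in a..b, f s)ᵀ = ∫ s in a..b, (f s)ᵀ :=
  ((transposeLinearEquiv ι ι ℝ ℝ).toContinuousLinearEquiv.toContinuousLinearMap
    |>.intervalIntegral_comp_comm (hf.intervalIntegrable a b)).symm

noncomputable def mulVecDotProductCLM (x : ι → ℝ) : Matrix ι ι ℝ →L[ℝ] ℝ :=
  LinearMap.toContinuousLinearMap
    { toFun := fun M => (M *ᵥ x) ⬝ᵥ x
      map_add' := fun M N => by rw [add_mulVec, add_dotProduct]
      map_smul' := fun c M => by rw [smul_mulVec, smul_dotProduct]; rfl }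

lemma intervalIntegral_mulVec_dotProduct {f : ℝ → Matrix ι ι ℝ} (hf : Continuous f)
    (a b : ℝ) (x : ι → ℝ) :
    ((∫ s in a..b, f s) *ᵥ x) ⬝ᵥ x = ∫ s in a..b, (f s *ᵥ x) ⬝ᵥ x :=
  ((mulVecDotProductCLM x).intervalIntegral_comp_comm (hf.intervalIntegrable a b)).symm

lemma mul_dotProduct_self_le_intervalIntegral {f : ℝ → Matrix ι ι ℝ} {g : ℝ → ℝ} {a b : ℝ}
    (hab : a ≤ b) (hf : Continuous f) (hg : IntervalIntegrable g volume a b)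
    (hfg : ∀ s ∈ Set.Icc a b, ∀ x, g s * (x ⬝ᵥ x) ≤ (f s *ᵥ x) ⬝ᵥ x) (x : ι → ℝ) :
    (∫ s in a..b, g s) * (x ⬝ᵥ x) ≤ ((∫ s in a..b, f s) *ᵥ x) ⬝ᵥ x := by
  rw [intervalIntegral_mulVec_dotProduct hf, ← intervalIntegral.integral_mul_const]
  exact intervalIntegral.integral_mono_on hab (hg.mul_const _)
    (((mulVecDotProductCLM x).continuous.comp hf).intervalIntegrable a b) fun s hs => hfg s hs x

end QuadraticForm

lemma ContinuousOn.matrix_inv {X K ι : Type*} [TopologicalSpace X] [Field K] [TopologicalSpace K]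
    [IsTopologicalDivisionRing K] [Fintype ι] [DecidableEq ι] {A : X → Matrix ι ι K} {s : Set X}
    (hA : ContinuousOn A s) (hdet : ∀ x ∈ s, (A x).det ≠ 0) :
    ContinuousOn (fun x => (A x)⁻¹) s := fun x hx =>
  (continuousAt_matrix_inv _ (Ring.inverse_eq_inv' (G₀ := K) ▸ continuousAt_inv₀ (hdet x hx))
    ).comp_continuousWithinAt (hA x hx)

section OperatorNorm

variable {n : ℕ}

lemma continuous_matrixOpNorm : Continuous (matrixOpNorm (n := n)) :=
  continuous_norm.comp <| LinearMap.continuous_of_finiteDimensional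
    (toEuclideanCLM (𝕜 := ℝ) (n := Fin n)).toAlgEquiv.toLinearMap

lemma matrixOpNorm_pos {M : Matrix (Fin n) (Fin n) ℝ} (hM : M ≠ 0) : 0 < matrixOpNorm M :=
  norm_pos_iff.2 <| (map_ne_zero_iff _ (toEuclideanCLM (𝕜 := ℝ)).injective).2 hM

lemma dotProduct_mulVec_le_matrixOpNorm_mul (M : Matrix (Fin n) (Fin n) ℝ) (x : Fin n → ℝ) :
    x ⬝ᵥ M *ᵥ x ≤ matrixOpNorm M * (x ⬝ᵥ x) := by
  set y := WithLp.toLp 2 x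
  calc x ⬝ᵥ M *ᵥ x = inner ℝ y (toEuclideanCLM (𝕜 := ℝ) M y) := (inner_toEuclideanCLM M y y).symm
    _ ≤ ‖y‖ * ‖toEuclideanCLM (𝕜 := ℝ) M y‖ := real_inner_le_norm _ _
    _ ≤ ‖y‖ * (matrixOpNorm M * ‖y‖) := by gcongr; exact ContinuousLinearMap.le_opNorm _ _
    _ = matrixOpNorm M * (x ⬝ᵥ x) := by rw [dotProduct_self_eq_norm_sq]; ring

theorem inv_matrixOpNorm_inv_mul_le_of_posDef {M : Matrix (Fin n) (Fin n) ℝ} (hM : M.PosDef)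
    (x : Fin n → ℝ) : (matrixOpNorm M⁻¹)⁻¹ * (x ⬝ᵥ x) ≤ (M *ᵥ x) ⬝ᵥ x := by
  set N := matrixOpNorm M⁻¹
  set q := (M *ᵥ x) ⬝ᵥ x
  set u := M⁻¹ *ᵥ x
  have hMu : M *ᵥ u = x := by
    rw [mulVec_mulVec, mul_nonsing_inv M ((isUnit_iff_isUnit_det M).1 hM.isUnit), one_mulVec]
  have hN : 0 ≤ N := norm_nonneg _
  have hq : 0 ≤ q := by simpa [q, dotProduct_comm] using hM.posSemidef.dotProduct_mulVec_nonneg x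
  have hxx : 0 ≤ x ⬝ᵥ x := by rw [dotProduct_self_eq_norm_sq]; positivity
  have hcs : (x ⬝ᵥ x) ^ 2 ≤ q * (x ⬝ᵥ u) := by
    have hsymm : LinearMap.IsSymm (toBilin' M) :=
      LinearMap.BilinForm.isSymm_iff.1 <| isSymm_toBilin'_iff_isSymm.2 <|
        (conjTranspose_eq_transpose_of_trivial M).symm.trans hM.isHermitian
    have := (toBilin' M).apply_sq_le_of_symm (fun y => ?_) hsymm x u
    · simpa [toBilin'_apply', hMu, q, dotProduct_comm] using this
    · simpa [toBilin'_apply'] using hM.posSemidef.dotProduct_mulVec_nonneg y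
  have hxu : x ⬝ᵥ u ≤ N * (x ⬝ᵥ x) := dotProduct_mulVec_le_matrixOpNorm_mul M⁻¹ x
  have hxN : x ⬝ᵥ x ≤ N * q := by
    rcases hxx.eq_or_lt with hx0 | hxpos
    · exact hx0 ▸ mul_nonneg hN hq
    refine le_of_mul_le_mul_left ?_ hxpos
    calc (x ⬝ᵥ x) * (x ⬝ᵥ x) = (x ⬝ᵥ x) ^ 2 := (sq _).symm
      _ ≤ q * (x ⬝ᵥ u) := hcs
      _ ≤ q * (N * (x ⬝ᵥ x)) := by gcongr
      _ = (x ⬝ᵥ x) * (N * q) := by ring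
  calc N⁻¹ * (x ⬝ᵥ x) ≤ N⁻¹ * (N * q) := by gcongr
    _ = (N⁻¹ * N) * q := by ring
    _ ≤ q := mul_le_of_le_one_left hq inv_mul_le_one

theorem matrixOpNorm_inv_le_of_mul_dotProduct_self_le {M : Matrix (Fin n) (Fin n) ℝ} {c : ℝ}
    (hc : 0 < c) (hM : ∀ x, c * (x ⬝ᵥ x) ≤ (M *ᵥ x) ⬝ᵥ x) : matrixOpNorm M⁻¹ ≤ c⁻¹ := by
  by_cases hdet : IsUnit M.det
  swap
  · rw [nonsing_inv_apply_not_isUnit M hdet, matrixOpNorm, map_zero, norm_zero]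
    positivity
  refine ContinuousLinearMap.opNorm_le_bound _ (inv_nonneg.2 hc.le) fun y => ?_
  obtain ⟨x, rfl⟩ : ∃ x, WithLp.toLp 2 x = y := ⟨y.ofLp, rfl⟩
  set u := M⁻¹ *ᵥ x
  have hMu : M *ᵥ u = x := by rw [mulVec_mulVec, mul_nonsing_inv M hdet, one_mulVec]
  have key : c * ‖WithLp.toLp 2 u‖ ^ 2 ≤ ‖WithLp.toLp 2 u‖ * ‖WithLp.toLp 2 x‖ :=
    calc c * ‖WithLp.toLp 2 u‖ ^ 2 = c * (u ⬝ᵥ u) := by rw [dotProduct_self_eq_norm_sq]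
      _ ≤ x ⬝ᵥ u := hMu ▸ hM u
      _ = inner ℝ (WithLp.toLp 2 u) (WithLp.toLp 2 x) := by
        rw [EuclideanSpace.inner_toLp_toLp, star_trivial]
      _ ≤ _ := real_inner_le_norm _ _
  rw [toEuclideanCLM_toLp, le_inv_mul_iff₀ hc]
  nlinarith [norm_nonneg (WithLp.toLp 2 u), norm_nonneg (WithLp.toLp 2 x)]

end OperatorNorm

/-- The integral of a continuous family of symmetric positive definite matrices is
symmetric positive definite, and the operator norm of its inverse satisfies
`‖(∫ B)⁻¹‖ ≤ (∫ ‖B(s)⁻¹‖⁻¹ ds)⁻¹`. -/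
theorem integral_posDef_and_inv_opNorm_le {n : ℕ} (hn : 1 ≤ n)
    (t₀ t₁ : ℝ) (ht : t₀ < t₁)
    (B : ℝ → Matrix (Fin n) (Fin n) ℝ) (hBc : Continuous B)
    (hBsym : ∀ s ∈ Set.Icc t₀ t₁, (B s)ᵀ = B s)
    (hBpos : ∀ s ∈ Set.Icc t₀ t₁, ∀ x : Fin n → ℝ, x ≠ 0 → 0 < (B s *ᵥ x) ⬝ᵥ x) :
    ((∫ s in t₀..t₁, B s)ᵀ = ∫ s in t₀..t₁, B s) ∧
    (∀ x : Fin n → ℝ, x ≠ 0 → 0 < ((∫ s in t₀..t₁, B s) *ᵥ x) ⬝ᵥ x) ∧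
    matrixOpNorm ((∫ s in t₀..t₁, B s)⁻¹)
      ≤ (∫ s in t₀..t₁, (matrixOpNorm ((B s)⁻¹))⁻¹)⁻¹ := by
  have : Nonempty (Fin n) := ⟨⟨0, hn⟩⟩
  have hIcc : Set.uIcc t₀ t₁ = Set.Icc t₀ t₁ := Set.uIcc_of_le ht.le
  have hBpd : ∀ s ∈ Set.Icc t₀ t₁, (B s).PosDef := fun s hs =>
    posDef_of_transpose_eq_of_dotProduct_pos (hBsym s hs) (hBpos s hs)
  have hgpos : ∀ s ∈ Set.Icc t₀ t₁, 0 < (matrixOpNorm (B s)⁻¹)⁻¹ := fun s hs =>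
    inv_pos.2 <| matrixOpNorm_pos (hBpd s hs).inv.isUnit.ne_zero
  have hgc : ContinuousOn (fun s => (matrixOpNorm (B s)⁻¹)⁻¹) (Set.uIcc t₀ t₁) := hIcc ▸
    (continuous_matrixOpNorm.comp_continuousOn <| hBc.continuousOn.matrix_inv fun s hs =>
      (hBpd s hs).det_pos.ne').inv₀ fun s hs => (inv_pos.1 (hgpos s hs)).ne'
  have hc : 0 < ∫ s in t₀..t₁, (matrixOpNorm (B s)⁻¹)⁻¹ :=
    intervalIntegral.intervalIntegral_pos_of_pos_on hgc.intervalIntegrable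
      (fun s hs => hgpos s (Set.Ioo_subset_Icc_self hs)) ht
  have hlower := mul_dotProduct_self_le_intervalIntegral ht.le hBc hgc.intervalIntegrable
    fun s hs => inv_matrixOpNorm_inv_mul_le_of_posDef (hBpd s hs)
  refine ⟨?_, fun x hx => ?_, matrixOpNorm_inv_le_of_mul_dotProduct_self_le hc hlower⟩
  · rw [transpose_intervalIntegral hBc]
    exact intervalIntegral.integral_congr fun s hs => hBsym s (hIcc ▸ hs)
  · refine lt_of_lt_of_le (mul_pos hc ?_) (hlower x)
    simpa using dotProduct_self_star_pos_iff.2 hx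
end

section
/- Let X be a metric space, δ ≥ 0, p ∈ X, and a, a₁, a₂ ≥ 0. Let c : [0, a] → X, c₁ : [0, a₁] → X, and c₂ : [0, a₂] → X be geodesics with c₁(0) = c₂(0) = p, c₁(a₁) = c(0), and c₂(a₂) = c(a). Assume the triangle is δ-thin along c, i.e., for every t ∈ [0, a] the distance from c(t) to the set c₁([0, a₁]) ∪ c₂([0, a₂]) is at most δ. Then there exist t₀ ∈ [0, a], t₁ ∈ [0, a₁], and t₂ ∈ [0, a₂] such that d(c₁(t₁), c(t₀)) = d(c₂(t₂), c(t₀)) ≤ δ. -/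
/-!
Along `c`, the function `t ↦ infDist (c t) S₁ - infDist (c t) S₂`, where `Sᵢ` is the image of
`cᵢ`, is continuous, nonpositive at `t = 0` (as `c 0 ∈ S₁`) and nonnegative at `t = a`
(as `c a ∈ S₂`), so it vanishes at some `t₀`. The sides `Sᵢ` are compact, hence both distances
from `c t₀` are attained, and thinness bounds their common value, the distance to `S₁ ∪ S₂`,
by `δ`.
-/

open Metric Set

theorem continuousOn_of_dist_eq_abs_sub {X : Type*} [PseudoMetricSpace X] {g : ℝ → X}
    {S : Set ℝ} (hg : ∀ s ∈ S, ∀ t ∈ S, dist (g s) (g t) = |s - t|) : ContinuousOn g S :=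
  (LipschitzOnWith.of_dist_le_mul (K := 1) fun s hs t ht => by
    rw [hg s hs t ht, NNReal.coe_one, one_mul, Real.dist_eq]).continuousOn

theorem Metric.infDist_union {X : Type*} [PseudoMetricSpace X] {x : X} {A B : Set X}
    (hA : A.Nonempty) (hB : B.Nonempty) :
    infDist x (A ∪ B) = min (infDist x A) (infDist x B) := by
  simp only [infDist, infEDist_union]
  exact ENNReal.toReal_min (infEDist_ne_top hA) (infEDist_ne_top hB)

theorem exists_infDist_eq_infDist_of_continuousOn {X : Type*} [PseudoMetricSpace X]
    {c : ℝ → X} {a b : ℝ} {A B : Set X} (hab : a ≤ b) (hc : ContinuousOn c (Icc a b))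
    (ha : c a ∈ A) (hb : c b ∈ B) : ∃ t ∈ Icc a b, infDist (c t) A = infDist (c t) B := by
  have hf : ContinuousOn (fun t => infDist (c t) A - infDist (c t) B) (Icc a b) :=
    ((continuous_infDist_pt A).comp_continuousOn hc).sub
      ((continuous_infDist_pt B).comp_continuousOn hc)
  have hfa : infDist (c a) A - infDist (c a) B ≤ 0 := by
    rw [infDist_zero_of_mem ha, zero_sub, neg_nonpos]
    exact infDist_nonneg
  have hfb : 0 ≤ infDist (c b) A - infDist (c b) B := by
    rw [infDist_zero_of_mem hb, sub_zero]
    exact infDist_nonneg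
  obtain ⟨t, ht, hft⟩ := intermediate_value_Icc hab hf ⟨hfa, hfb⟩
  exact ⟨t, ht, sub_eq_zero.mp hft⟩

theorem thin_triangle_equidistant_point_general {X : Type*} [MetricSpace X]
    (δ : ℝ)
    (a a₁ a₂ : ℝ) (ha : 0 ≤ a) (ha₁ : 0 ≤ a₁) (ha₂ : 0 ≤ a₂)
    (c c₁ c₂ : ℝ → X)
    (hc : ∀ s ∈ Set.Icc (0 : ℝ) a, ∀ t ∈ Set.Icc (0 : ℝ) a, dist (c s) (c t) = |s - t|)
    (hc₁ : ∀ s ∈ Set.Icc (0 : ℝ) a₁, ∀ t ∈ Set.Icc (0 : ℝ) a₁, dist (c₁ s) (c₁ t) = |s - t|)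
    (hc₂ : ∀ s ∈ Set.Icc (0 : ℝ) a₂, ∀ t ∈ Set.Icc (0 : ℝ) a₂, dist (c₂ s) (c₂ t) = |s - t|)
    (he₁ : c₁ a₁ = c 0) (he₂ : c₂ a₂ = c a)
    (hthin : ∀ t ∈ Set.Icc (0 : ℝ) a,
      infDist (c t) (c₁ '' Set.Icc (0 : ℝ) a₁ ∪ c₂ '' Set.Icc (0 : ℝ) a₂) ≤ δ) :
    ∃ t₀ ∈ Set.Icc (0 : ℝ) a, ∃ t₁ ∈ Set.Icc (0 : ℝ) a₁, ∃ t₂ ∈ Set.Icc (0 : ℝ) a₂,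
      dist (c₁ t₁) (c t₀) = dist (c₂ t₂) (c t₀) ∧ dist (c₁ t₁) (c t₀) ≤ δ := by
  set S₁ := c₁ '' Icc 0 a₁
  set S₂ := c₂ '' Icc 0 a₂
  have hne₁ : S₁.Nonempty := (nonempty_Icc.mpr ha₁).image c₁
  have hne₂ : S₂.Nonempty := (nonempty_Icc.mpr ha₂).image c₂
  have hS₁ : IsCompact S₁ :=
    isCompact_Icc.image_of_continuousOn (continuousOn_of_dist_eq_abs_sub hc₁)
  have hS₂ : IsCompact S₂ :=
    isCompact_Icc.image_of_continuousOn (continuousOn_of_dist_eq_abs_sub hc₂)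
  obtain ⟨t₀, ht₀, heq⟩ := exists_infDist_eq_infDist_of_continuousOn (A := S₁) (B := S₂) ha
    (continuousOn_of_dist_eq_abs_sub hc) ⟨a₁, right_mem_Icc.mpr ha₁, he₁⟩
    ⟨a₂, right_mem_Icc.mpr ha₂, he₂⟩
  obtain ⟨_, ⟨t₁, ht₁, rfl⟩, hd₁⟩ := hS₁.exists_infDist_eq_dist hne₁ (c t₀)
  obtain ⟨_, ⟨t₂, ht₂, rfl⟩, hd₂⟩ := hS₂.exists_infDist_eq_dist hne₂ (c t₀)
  have hthin₀ := hthin t₀ ht₀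
  rw [infDist_union hne₁ hne₂, heq, min_self] at hthin₀
  refine ⟨t₀, ht₀, t₁, ht₁, t₂, ht₂, ?_, ?_⟩
  · rw [dist_comm, ← hd₁, heq, hd₂, dist_comm]
  · rwa [dist_comm, ← hd₁, heq]

/-- In a geodesic triangle with vertex `p` that is `δ`-thin along the side `c`,
there is a point of `c` equidistant (with distance at most `δ`) from the
two other sides. -/
theorem thin_triangle_equidistant_point {X : Type*} [MetricSpace X]
    (δ : ℝ) (hδ : 0 ≤ δ) (p : X)
    (a a₁ a₂ : ℝ) (ha : 0 ≤ a) (ha₁ : 0 ≤ a₁) (ha₂ : 0 ≤ a₂)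
    (c c₁ c₂ : ℝ → X)
    (hc : ∀ s ∈ Set.Icc (0 : ℝ) a, ∀ t ∈ Set.Icc (0 : ℝ) a, dist (c s) (c t) = |s - t|)
    (hc₁ : ∀ s ∈ Set.Icc (0 : ℝ) a₁, ∀ t ∈ Set.Icc (0 : ℝ) a₁, dist (c₁ s) (c₁ t) = |s - t|)
    (hc₂ : ∀ s ∈ Set.Icc (0 : ℝ) a₂, ∀ t ∈ Set.Icc (0 : ℝ) a₂, dist (c₂ s) (c₂ t) = |s - t|)
    (hp₁ : c₁ 0 = p) (hp₂ : c₂ 0 = p)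
    (he₁ : c₁ a₁ = c 0) (he₂ : c₂ a₂ = c a)
    (hthin : ∀ t ∈ Set.Icc (0 : ℝ) a,
      infDist (c t) (c₁ '' Set.Icc (0 : ℝ) a₁ ∪ c₂ '' Set.Icc (0 : ℝ) a₂) ≤ δ) :
    ∃ t₀ ∈ Set.Icc (0 : ℝ) a, ∃ t₁ ∈ Set.Icc (0 : ℝ) a₁, ∃ t₂ ∈ Set.Icc (0 : ℝ) a₂,
      dist (c₁ t₁) (c t₀) = dist (c₂ t₂) (c t₀) ∧ dist (c₁ t₁) (c t₀) ≤ δ :=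
  thin_triangle_equidistant_point_general δ a a₁ a₂ ha ha₁ ha₂ c c₁ c₂ hc hc₁ hc₂ he₁ he₂ hthin
end
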